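/- arXiv:1210.2463 — 2 statements merged into one kernel-verified Lean document; each statement's English description precedes it below -/
import Mathlib

section
/- If an infinite binary tree t : ({0,1}*) → {a,b} has a good branch (an infinite branch all of whose nodes are labelled a and which turns left infinitely often), then t has a left-most good branch, i.e. a good branch β such that no good branch of t is lexicographically strictly to the left of β. -/
/-!
Build the branch greedily: at each node turn left exactly when some good branch passes through
the left child. By induction every node of this branch lies on a good branch, so all its labels
are `a`, and a good branch diverging to its left at node `v` would pass through the left child of
`v`, where the greedy branch went left. Finally, if the greedy branch turned right from some depth
`m` on, a good branch through its depth-`m` node must turn left somewhere below it, and at its first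
deviation it would lie to the left of the greedy branch.
-/

/-- Infinite binary trees over {a,b}; `true` = a, `false` = b. -/
abbrev Tree2 := List (Fin 2) → Bool

/-- The length-`n` prefix of a branch. -/
def pre (β : ℕ → Fin 2) (n : ℕ) : List (Fin 2) := List.ofFn (fun i : Fin n => β i)

/-- A branch is good: all its finite prefixes are labelled `a` and it turns left (0)
infinitely often. -/
def Good (t : Tree2) (β : ℕ → Fin 2) : Prop :=
  (∀ n, t (pre β n) = true) ∧ (∀ m, ∃ n ≥ m, β n = 0)

/-- `β` is strictly to the left of `γ`. -/
def LeftOf (β γ : ℕ → Fin 2) : Prop :=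
  ∃ n, (∀ i < n, β i = γ i) ∧ β n = 0 ∧ γ n = 1

/-- A branch passes through a node. -/
def Through (γ : ℕ → Fin 2) (v : List (Fin 2)) : Prop := pre γ v.length = v

def GoodThrough (t : Tree2) (v : List (Fin 2)) : Prop := ∃ γ, Good t γ ∧ Through γ v

open Classical in
noncomputable def leftmostStep (t : Tree2) (v : List (Fin 2)) : Fin 2 :=
  if GoodThrough t (v ++ [0]) then 0 else 1

noncomputable def leftmostPrefix (t : Tree2) : ℕ → List (Fin 2)
  | 0 => []
  | n + 1 => leftmostPrefix t n ++ [leftmostStep t (leftmostPrefix t n)]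

noncomputable def leftmostBranch (t : Tree2) (n : ℕ) : Fin 2 :=
  leftmostStep t (leftmostPrefix t n)

lemma pre_succ (β : ℕ → Fin 2) (n : ℕ) : pre β (n + 1) = pre β n ++ [β n] := by
  simp only [pre, List.ofFn_succ', List.concat_eq_append, Fin.val_castSucc, Fin.val_last]

lemma length_pre (β : ℕ → Fin 2) (n : ℕ) : (pre β n).length = n := by
  simp [pre]

lemma pre_eq_pre_iff {β γ : ℕ → Fin 2} {n : ℕ} : pre γ n = pre β n ↔ ∀ i < n, γ i = β i := by
  simp only [pre, List.ofFn_inj, funext_iff, Fin.forall_iff]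

lemma through_pre_iff {β γ : ℕ → Fin 2} {n : ℕ} : Through γ (pre β n) ↔ ∀ i < n, γ i = β i := by
  rw [Through, length_pre, pre_eq_pre_iff]

lemma Through.append_apply_length {γ : ℕ → Fin 2} {v : List (Fin 2)} (h : Through γ v) :
    Through γ (v ++ [γ v.length]) := by
  rw [Through, List.length_append, List.length_singleton, pre_succ, h]

lemma pre_leftmostBranch (t : Tree2) (n : ℕ) : pre (leftmostBranch t) n = leftmostPrefix t n := by
  induction n with
  | zero => rfl
  | succ n ih => rw [pre_succ, ih]; rfl

lemma leftmostStep_eq_zero {t : Tree2} {γ : ℕ → Fin 2} {v : List (Fin 2)} (hγ : Good t γ)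
    (hv : Through γ v) (h0 : γ v.length = 0) : leftmostStep t v = 0 :=
  if_pos ⟨γ, hγ, h0 ▸ hv.append_apply_length⟩

lemma GoodThrough.append_leftmostStep {t : Tree2} {v : List (Fin 2)} (h : GoodThrough t v) :
    GoodThrough t (v ++ [leftmostStep t v]) := by
  unfold leftmostStep
  split_ifs with hleft
  · exact hleft
  · obtain ⟨γ, hγ, hv⟩ := h
    have hright : γ v.length = 1 := by
      by_contra hne
      exact hleft ⟨γ, hγ, (show γ v.length = 0 by omega) ▸ hv.append_apply_length⟩
    exact ⟨γ, hγ, hright ▸ hv.append_apply_length⟩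

lemma goodThrough_pre_leftmostBranch {t : Tree2} (h : ∃ β, Good t β) (n : ℕ) :
    GoodThrough t (pre (leftmostBranch t) n) := by
  rw [pre_leftmostBranch]
  induction n with
  | zero =>
    obtain ⟨β, hβ⟩ := h
    exact ⟨β, hβ, rfl⟩
  | succ n ih => exact ih.append_leftmostStep

lemma leftmostBranch_label {t : Tree2} (h : ∃ β, Good t β) (n : ℕ) :
    t (pre (leftmostBranch t) n) = true := by
  obtain ⟨γ, hγ, hthrough⟩ := goodThrough_pre_leftmostBranch h n
  rw [← pre_eq_pre_iff.mpr (through_pre_iff.mp hthrough)]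
  exact hγ.1 n

lemma not_leftOf_leftmostBranch {t : Tree2} {γ : ℕ → Fin 2} (hγ : Good t γ) :
    ¬ LeftOf γ (leftmostBranch t) := by
  rintro ⟨n, hagree, hγ0, hβ1⟩
  have hthrough : Through γ (pre (leftmostBranch t) n) := through_pre_iff.mpr hagree
  have hβ0 : leftmostBranch t n = 0 := by
    rw [leftmostBranch, ← pre_leftmostBranch]
    exact leftmostStep_eq_zero hγ hthrough (by rwa [length_pre])
  rw [hβ0] at hβ1
  exact absurd hβ1 (by decide)

lemma leftOf_of_eventually_one {β γ : ℕ → Fin 2} {m : ℕ} (hβ : ∀ n ≥ m, β n = 1)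
    (hagree : ∀ i < m, γ i = β i) (hγ : ∃ n ≥ m, γ n = 0) : LeftOf γ β := by
  have hdiff : ∃ k, γ k ≠ β k := by
    obtain ⟨n, hn, h0⟩ := hγ
    exact ⟨n, by rw [h0, hβ n hn]; decide⟩
  classical
  have hk : m ≤ Nat.find hdiff := by
    by_contra hlt
    exact Nat.find_spec hdiff (hagree _ (by omega))
  have hβk := hβ _ hk
  have hγk := Nat.find_spec hdiff
  exact ⟨Nat.find hdiff, fun i hi => not_not.mp (Nat.find_min hdiff hi), by omega, hβk⟩

lemma leftmostBranch_frequently_left {t : Tree2} (h : ∃ β, Good t β) (m : ℕ) :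
    ∃ n ≥ m, leftmostBranch t n = 0 := by
  by_contra! hright
  obtain ⟨γ, hγ, hthrough⟩ := goodThrough_pre_leftmostBranch h m
  exact not_leftOf_leftmostBranch hγ <|
    leftOf_of_eventually_one (fun n hn => by have := hright n hn; omega)
      (through_pre_iff.mp hthrough) (hγ.2 m)

/-- If a tree has a good branch, it has a left-most good branch. -/
theorem exists_leftmost_good_branch (t : Tree2) (h : ∃ β, Good t β) :
    ∃ β, Good t β ∧ ∀ γ, Good t γ → ¬ LeftOf γ β :=
  ⟨leftmostBranch t, ⟨leftmostBranch_label h, leftmostBranch_frequently_left h⟩,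
    fun _ hγ => not_leftOf_leftmostBranch hγ⟩
end

section
/- The set G of infinite binary trees over {a,b} having a good branch is Σ¹₁-hard: the set IF of ill-founded trees on ω (trees in Tr with an infinite branch) continuously reduces to G, i.e., there exists a continuous f : Tr → ({0,1}* → {a,b}) with f⁻¹(G) = IF. -/
/-- The set of trees that have a good branch. -/
def G : Set Tree2 := {t | ∃ β, Good t β}

/-- The space of trees on ω: prefix-closed subsets of `List ℕ` (as characteristic
functions), topologized as a subspace of `2 ^ (List ℕ)`. -/
abbrev TrN := {T : List ℕ → Bool // ∀ u v : List ℕ, u <+: v → T v = true → T u = true}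

/-- Ill-founded trees: those with an infinite branch. -/
def IF : Set TrN :=
  {T | ∃ x : ℕ → ℕ, ∀ k : ℕ, T.1 (List.ofFn fun i : Fin k => x i) = true}

/-! ### Auxiliary machinery for the reduction -/

/-- Decode a binary string into the list of lengths of maximal runs of `1`s
separated by `0`s, dropping a trailing run of `1`s; `c` is an accumulator. -/
def dec (c : ℕ) : List (Fin 2) → List ℕ
  | [] => []
  | b :: l => if b = 0 then c :: dec 0 l else dec (c + 1) l

lemma dec_append_prefix (c : ℕ) (l r : List (Fin 2)) : dec c l <+: dec c (l ++ r) := by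
  induction l generalizing c with
  | nil => simp [dec]
  | cons b t ih =>
    by_cases hb : b = 0 <;> simp [dec, hb]
    · exact ih 0
    · exact ih (c + 1)

lemma dec_prefix {l l' : List (Fin 2)} (h : l <+: l') (c : ℕ) : dec c l <+: dec c l' := by
  obtain ⟨r, rfl⟩ := h; exact dec_append_prefix c l r

lemma length_dec (c : ℕ) (l : List (Fin 2)) : (dec c l).length = l.count 0 := by
  induction l generalizing c with
  | nil => simp [dec]
  | cons b t ih =>
    by_cases hb : b = 0 <;> simp [dec, hb, List.count_cons, ih]

lemma dec_replicate (c j : ℕ) (l : List (Fin 2)) :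
    dec c (List.replicate j 1 ++ l) = dec (c + j) l := by
  induction j generalizing c with
  | zero => simp
  | succ j ih =>
    simp only [List.replicate_succ, List.cons_append, dec]
    have : (1 : Fin 2) ≠ 0 := by decide
    rw [if_neg this, ih]
    ring_nf

lemma pre_prefix (β : ℕ → Fin 2) {a b : ℕ} (h : a ≤ b) : pre β a <+: pre β b := by
  induction b with
  | zero => simp_all [pre]
  | succ b ih =>
    rcases Nat.lt_or_ge a (b + 1) with h' | h'
    · exact (ih (by omega)).trans (by rw [pre_succ]; exact List.prefix_append _ _)
    · have : a = b + 1 := by omega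
      subst this; exact List.prefix_refl _

/-- The branch of the binary tree encoding the branch `x` of a tree on ω:
`1^(x 0) 0 1^(x 1) 0 ⋯`. -/
def e (x : ℕ → ℕ) (k : ℕ) : Fin 2 :=
  if h : k ≤ x 0 then (if k = x 0 then 0 else 1)
  else e (fun i => x (i + 1)) (k - x 0 - 1)
termination_by k
decreasing_by omega

lemma pre_e_small (x : ℕ → ℕ) {n : ℕ} (h : n ≤ x 0) :
    pre (e x) n = List.replicate n 1 := by
  rw [List.eq_replicate_iff]
  refine ⟨by simp [pre], ?_⟩
  intro b hb
  simp only [pre, List.mem_ofFn, Set.mem_range] at hb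
  obtain ⟨i, rfl⟩ := hb
  rw [e]
  have h1 : (i : ℕ) ≤ x 0 := by omega
  have h2 : (i : ℕ) ≠ x 0 := by omega
  simp [h1, h2]

lemma pre_e_big (x : ℕ → ℕ) {n : ℕ} (h : x 0 < n) :
    pre (e x) n = List.replicate (x 0) 1 ++ 0 :: pre (e fun i => x (i + 1)) (n - x 0 - 1) := by
  apply List.ext_getElem
  · simp [pre]; omega
  · intro i hi hi'
    simp only [pre, List.getElem_ofFn]
    rcases Nat.lt_trichotomy i (x 0) with hc | hc | hc
    · rw [List.getElem_append_left (by simpa using hc), List.getElem_replicate]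
      rw [e]
      have h2 : i ≠ x 0 := by omega
      simp [Nat.le_of_lt hc, h2]
    · subst hc
      rw [List.getElem_append_right (by simp)]
      simp only [List.length_replicate, Nat.sub_self, List.getElem_cons_zero]
      rw [e]; simp
    · obtain ⟨j, rfl⟩ : ∃ j, i = x 0 + (j + 1) := ⟨i - x 0 - 1, by omega⟩
      rw [List.getElem_append_right (by simp)]
      have h4 : ¬ x 0 + (j + 1) ≤ x 0 := by omega
      rw [e, dif_neg h4]
      simp only [List.length_replicate, Nat.add_sub_cancel_left, Nat.add_sub_cancel,
        List.getElem_cons_succ, pre, List.getElem_ofFn]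

lemma dec_pre_e (x : ℕ → ℕ) (n : ℕ) :
    ∃ m, dec 0 (pre (e x) n) <+: List.ofFn (fun i : Fin m => x i) := by
  by_cases h : n ≤ x 0
  · refine ⟨0, ?_⟩
    rw [pre_e_small x h]
    have := dec_replicate 0 n ([] : List (Fin 2))
    simp only [List.append_nil] at this
    simp [this, dec]
  · obtain ⟨m, hm⟩ := dec_pre_e (fun i => x (i + 1)) (n - x 0 - 1)
    refine ⟨m + 1, ?_⟩
    rw [pre_e_big x (by omega), dec_replicate]
    have h0 : (0 : Fin 2) = 0 := rfl
    simp only [dec, if_pos h0, Nat.zero_add]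
    rw [List.ofFn_succ]
    simp only [Fin.val_zero, Fin.val_succ]
    exact List.cons_prefix_cons.mpr ⟨rfl, hm⟩
termination_by n
decreasing_by omega

lemma e_zero (x : ℕ → ℕ) (m : ℕ) : ∃ n ≥ m, e x n = 0 := by
  by_cases h : m ≤ x 0
  · exact ⟨x 0, h, by rw [e]; simp⟩
  · obtain ⟨n', hn', h0⟩ := e_zero (fun i => x (i + 1)) (m - x 0 - 1)
    refine ⟨n' + x 0 + 1, by omega, ?_⟩
    rw [e]
    have h1 : ¬ n' + x 0 + 1 ≤ x 0 := by omega
    rw [dif_neg h1]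
    have h2 : n' + x 0 + 1 - x 0 - 1 = n' := by omega
    rw [h2]; exact h0
termination_by m
decreasing_by omega

/-- `G` is Σ¹₁-hard: `IF` continuously reduces to `G`. -/
theorem IF_reduces_to_G : ∃ f : TrN → Tree2, Continuous f ∧ ∀ T, T ∈ IF ↔ f T ∈ G := by
  refine ⟨fun T s => T.1 (dec 0 s), ?_, ?_⟩
  · exact continuous_pi fun s => (continuous_apply (dec 0 s)).comp continuous_subtype_val
  · intro T
    constructor
    · rintro ⟨x, hx⟩
      refine ⟨e x, ?_, e_zero x⟩
      intro n
      obtain ⟨m, hm⟩ := dec_pre_e x n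
      exact T.2 _ _ hm (hx m)
    · rintro ⟨β, h1, h2⟩
      simp only [Set.mem_setOf_eq] at h1 ⊢
      choose g hg hg0 using h2
      set N : ℕ → ℕ := fun k => Nat.rec 0 (fun _ ih => g ih + 1) k with hN
      have hNmono : Monotone N := by
        apply monotone_nat_of_le_succ
        intro k
        have hstep : N (k + 1) = g (N k) + 1 := rfl
        have := hg (N k)
        omega
      have hcount : ∀ k, k ≤ (pre β (N k)).count 0 := by
        intro k
        induction k with
        | zero => omega
        | succ k ih =>
          have hstep : N (k + 1) = g (N k) + 1 := rfl
          rw [hstep, pre_succ, hg0 (N k), List.count_append]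
          have hmono : (pre β (N k)).count 0 ≤ (pre β (g (N k))).count 0 :=
            ((pre_prefix β (hg (N k))).sublist).count_le _
          simp only [List.count_cons, List.count_nil, beq_self_eq_true, if_true]
          omega
      set u : ℕ → List ℕ := fun j => dec 0 (pre β (N j)) with hu
      have hlen : ∀ j, j ≤ (u j).length := by
        intro j; rw [hu]; simp only [length_dec]; exact hcount j
      have hchain : ∀ i j, i ≤ j → u i <+: u j := by
        intro i j hij
        exact dec_prefix (pre_prefix β (hNmono hij)) 0
      refine ⟨fun i => (u (i + 1)).getD i 0, ?_⟩
      intro k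
      have hpref : (List.ofFn fun i : Fin k => (u (i + 1)).getD (i : ℕ) 0) <+: u k := by
        have heq : (List.ofFn fun i : Fin k => (u (i + 1)).getD (i : ℕ) 0) = (u k).take k := by
          apply List.ext_getElem
          · simp [Nat.min_eq_left (hlen k)]
          · intro i hi hi'
            simp only [List.getElem_ofFn, List.getElem_take]
            have hilt : i < (u (i + 1)).length := lt_of_lt_of_le (Nat.lt_succ_self i) (hlen (i + 1))
            rw [List.getD_eq_getElem _ _ hilt]
            have hik : i < k := by simpa using hi
            exact (hchain (i + 1) k hik).getElem hilt
        rw [heq]; exact List.take_prefix _ _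
      exact T.2 _ _ hpref (h1 (N k))
end
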